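/- arXiv:2005.11688 — 5 statements merged into one kernel-verified Lean document; each statement's English description precedes it below -/
import Mathlib

section
/- (WDec correctness) Let N ≥ 2 be a natural number, let g be a unit of ZMod (N²), let sk, r, m be natural numbers with m < N, and write ν for the image of N in ZMod (N²). Set C₁ := ((g : ZMod (N²))^{sk})^{r} · (1 + (m : ZMod (N²))·ν) and C₂ := g^{r} (a unit). Then C₁ · ((C₂^{sk})⁻¹ : ZMod (N²)) = 1 + m·ν, the canonical representative (val) of this element of ZMod (N²) equals the natural number 1 + m·N, and hence ((C₁ · ((C₂^{sk})⁻¹)).val − 1) / N = m. -/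
/-!
Both ciphertext components carry the same mask `g ^ (sk * r)`, so dividing `C₁` by `C₂ ^ sk`
leaves `1 + m N`. Since `m < N`, the natural number `1 + m N` is below `N ²`, so it is its own
canonical representative in `ZMod (N ^ 2)`, and `L` reads `m` off it.
-/

theorem Units.pow_pow_mul_mul_inv_pow_pow {M : Type*} [CommMonoid M] (g : Mˣ) (a b : ℕ) (y : M) :
    ((g : M) ^ a) ^ b * y * ↑(((g ^ b) ^ a)⁻¹) = y := by
  rw [mul_right_comm, ← Units.val_pow_eq_pow_val, ← Units.val_pow_eq_pow_val, ← pow_mul,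
    ← pow_mul, mul_comm a b, ← Units.val_mul, mul_inv_cancel, Units.val_one, one_mul]

theorem one_add_mul_lt_sq {N m : ℕ} (hN : 2 ≤ N) (hm : m < N) : 1 + m * N < N ^ 2 := by
  nlinarith

theorem ZMod.val_one_add_mul_natCast {N m : ℕ} (hN : 2 ≤ N) (hm : m < N) :
    (1 + (m : ZMod (N ^ 2)) * N).val = 1 + m * N := by
  rw [← Nat.cast_one, ← Nat.cast_mul, ← Nat.cast_add, ZMod.val_natCast,
    Nat.mod_eq_of_lt (one_add_mul_lt_sq hN hm)]

theorem pctd_wdec_correctness (N : ℕ) (hN : 2 ≤ N)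
    (g : (ZMod (N ^ 2))ˣ) (sk r m : ℕ) (hm : m < N)
    (ν : ZMod (N ^ 2)) (hν : ν = (N : ZMod (N ^ 2)))
    (C₁ : ZMod (N ^ 2)) (hC₁ : C₁ = ((g : ZMod (N ^ 2)) ^ sk) ^ r * (1 + (m : ZMod (N ^ 2)) * ν))
    (C₂ : (ZMod (N ^ 2))ˣ) (hC₂ : C₂ = g ^ r) :
    C₁ * (((C₂ ^ sk : (ZMod (N ^ 2))ˣ) : ZMod (N ^ 2))⁻¹ : ZMod (N ^ 2))
        = 1 + (m : ZMod (N ^ 2)) * ν ∧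
    (C₁ * (((C₂ ^ sk : (ZMod (N ^ 2))ˣ) : ZMod (N ^ 2))⁻¹ : ZMod (N ^ 2))).val = 1 + m * N ∧
    ((C₁ * (((C₂ ^ sk : (ZMod (N ^ 2))ˣ) : ZMod (N ^ 2))⁻¹ : ZMod (N ^ 2))).val - 1) / N = m := by
  have hdec : C₁ * (((C₂ ^ sk : (ZMod (N ^ 2))ˣ) : ZMod (N ^ 2))⁻¹ : ZMod (N ^ 2))
      = 1 + (m : ZMod (N ^ 2)) * ν := by
    rw [ZMod.inv_coe_unit, hC₁, hC₂, Units.pow_pow_mul_mul_inv_pow_pow]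
  have hval : (C₁ * (((C₂ ^ sk : (ZMod (N ^ 2))ˣ) : ZMod (N ^ 2))⁻¹ : ZMod (N ^ 2))).val
      = 1 + m * N := by
    rw [hdec, hν, ZMod.val_one_add_mul_natCast hN hm]
  refine ⟨hdec, hval, ?_⟩
  rw [hval, Nat.add_sub_cancel_left, Nat.mul_div_cancel _ (by omega)]
end

section
/- (SDec correctness) Let N ≥ 2 and λ ≥ 1 be natural numbers with λ coprime to N, let pk be a unit of ZMod (N²) satisfying pk^{λ} = 1, let r, m be natural numbers with m < N, and write ν for the image of N in ZMod (N²). Set C₁ := (pk : ZMod (N²))^{r} · (1 + (m : ZMod (N²))·ν). Then C₁^{λ} = 1 + ((λ·m : ℕ) : ZMod (N²))·ν, and letting D := ((C₁^{λ}).val − 1) / N (a natural number), one has ((D : ZMod N)) · ((λ : ZMod N))⁻¹ = (m : ZMod N); i.e., the master-key decryption m = L(C₁^{λ})·λ⁻¹ mod N recovers the message. -/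
/-!
Since `ν² = 0`, the binomial expansion of `(1 + m ν) ^ λ` stops after the linear term, and the
randomizer `pk ^ r` is killed by `λ`, so `C₁ ^ λ = 1 + λ m ν`. Reducing `λ m` modulo `N` does not
change `λ m ν`, and for `j < N` the canonical representative of `1 + j N` is `1 + j N` itself, so `L`
returns `λ m mod N`; multiplying by `λ⁻¹` recovers `m`.
-/

lemma one_add_pow_of_mul_self_eq_zero {R : Type*} [CommSemiring R] {a : R} (ha : a * a = 0)
    (n : ℕ) : (1 + a) ^ n = 1 + n * a := by
  induction n with
  | zero => simp
  | succ n ih =>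
    calc (1 + a) ^ (n + 1) = 1 + (n + 1) * a + n * (a * a) := by rw [pow_succ, ih]; ring
      _ = 1 + ((n + 1 : ℕ) : R) * a := by rw [ha, mul_zero, add_zero, Nat.cast_succ]

namespace ZMod

lemma natCast_mul_self_eq_zero (N : ℕ) : (N : ZMod (N ^ 2)) * N = 0 := by
  rw [← Nat.cast_mul, ← sq, natCast_self]

lemma val_one_add_mul_self {N j : ℕ} (hN : 1 < N) (hj : j < N) :
    ((1 + j * N : ℕ) : ZMod (N ^ 2)).val = 1 + j * N := by
  apply val_cast_of_lt
  calc 1 + j * N < (j + 1) * N := by nlinarith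
    _ ≤ N ^ 2 := by rw [sq]; exact Nat.mul_le_mul_right N hj

end ZMod

def paillierL (N : ℕ) (x : ZMod (N ^ 2)) : ℕ := (x.val - 1) / N

lemma paillierL_one_add_mul (N : ℕ) (hN : 1 < N) (k : ℕ) :
    paillierL N (1 + k * N) = k % N := by
  have hk : (1 + k * N : ZMod (N ^ 2)) = ((1 + k % N * N : ℕ) : ZMod (N ^ 2)) := by
    conv_lhs => rw [← Nat.div_add_mod k N]
    push_cast
    linear_combination ((k / N : ℕ) : ZMod (N ^ 2)) * ZMod.natCast_mul_self_eq_zero N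
  rw [paillierL, hk, ZMod.val_one_add_mul_self hN (Nat.mod_lt k (by omega)), Nat.add_sub_cancel_left,
    Nat.mul_div_cancel _ (by omega)]

theorem pctd_sdec_correctness_general (N lam : ℕ) (hN : 2 ≤ N)
    (hco : Nat.Coprime lam N)
    (pk : (ZMod (N ^ 2))ˣ) (hpk : pk ^ lam = 1)
    (r m : ℕ)
    (ν : ZMod (N ^ 2)) (hν : ν = (N : ZMod (N ^ 2)))
    (C₁ : ZMod (N ^ 2))
    (hC₁ : C₁ = ((pk : ZMod (N ^ 2)) ^ r) * (1 + (m : ZMod (N ^ 2)) * ν)) :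
    C₁ ^ lam = 1 + ((lam * m : ℕ) : ZMod (N ^ 2)) * ν ∧
    ((((C₁ ^ lam).val - 1) / N : ℕ) : ZMod N) * ((lam : ZMod N))⁻¹ = (m : ZMod N) := by
  have hνν : ν * ν = 0 := hν ▸ ZMod.natCast_mul_self_eq_zero N
  have hmν : (m * ν) * (m * ν) = 0 := by rw [mul_mul_mul_comm, hνν, mul_zero]
  have hpkr : ((pk : ZMod (N ^ 2)) ^ r) ^ lam = 1 := by
    rw [← pow_mul, mul_comm, pow_mul, ← Units.val_pow_eq_pow_val, hpk, Units.val_one, one_pow]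
  have hC : C₁ ^ lam = 1 + ((lam * m : ℕ) : ZMod (N ^ 2)) * ν := by
    rw [hC₁, mul_pow, hpkr, one_mul, one_add_pow_of_mul_self_eq_zero hmν, Nat.cast_mul, mul_assoc]
  have hL : ((C₁ ^ lam).val - 1) / N = lam * m % N := by
    rw [hC, hν]
    exact paillierL_one_add_mul N (by omega) _
  refine ⟨hC, ?_⟩
  rw [hL, ZMod.natCast_mod, Nat.cast_mul, mul_right_comm, ZMod.coe_mul_inv_eq_one _ hco, one_mul]

theorem pctd_sdec_correctness (N lam : ℕ) (hN : 2 ≤ N) (hlam : 1 ≤ lam)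
    (hco : Nat.Coprime lam N)
    (pk : (ZMod (N ^ 2))ˣ) (hpk : pk ^ lam = 1)
    (r m : ℕ) (hm : m < N)
    (ν : ZMod (N ^ 2)) (hν : ν = (N : ZMod (N ^ 2)))
    (C₁ : ZMod (N ^ 2))
    (hC₁ : C₁ = ((pk : ZMod (N ^ 2)) ^ r) * (1 + (m : ZMod (N ^ 2)) * ν)) :
    C₁ ^ lam = 1 + ((lam * m : ℕ) : ZMod (N ^ 2)) * ν ∧
    ((((C₁ ^ lam).val - 1) / N : ℕ) : ZMod N) * ((lam : ZMod N))⁻¹ = (m : ZMod N) :=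
  pctd_sdec_correctness_general N lam hN hco pk hpk r m ν hν C₁ hC₁
end

section
/- (SMin Step 2 masked comparison correctness) Let ℓ be a natural number with 16 ≤ ℓ and 8 ∣ ℓ, and let N be a natural number with 2^{ℓ−1} ≤ N. Let a, b, r', r be natural numbers with a ≠ b, a < 2^{ℓ/8}, b < 2^{ℓ/8}, 2^{ℓ/8} ≤ r' < 2^{ℓ/4 − 1}, and r < 2^{ℓ/8}. Let z be the integer r'·((a : ℤ) − (b : ℤ)) + r and let ρ be the canonical nonnegative representative of z modulo N. Then ρ < 2^{ℓ/2} if and only if b < a. (Hence the server's test 'bit length of the decrypted residue exceeds ℓ/2' holds exactly when a < b.) -/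
/-!
Write `z = r' (a - b) + r`. Because `0 ≤ r < r'` and `a - b` is a nonzero integer, `z` has the sign
of `a - b`. Because `|a - b| < 2^(ℓ/8)` and `r' < 2^(ℓ/4 - 1)`, we have `|z| < 2^(ℓ/2)`, while
`N ≥ 2^(ℓ-1) ≥ 2 · 2^(ℓ/2)`. So reducing modulo `N` leaves a nonnegative `z` below `2^(ℓ/2)` and
sends a negative `z` to `z + N > N - 2^(ℓ/2) ≥ 2^(ℓ/2)`.
-/

namespace Int

theorem emod_lt_iff_nonneg_of_abs_lt {z N T : ℤ} (hz : |z| < T) (hN : 2 * T ≤ N) :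
    z % N < T ↔ 0 ≤ z := by
  obtain ⟨hlo, hhi⟩ := abs_lt.mp hz
  by_cases hz0 : 0 ≤ z
  · rw [emod_eq_of_lt hz0 (by linarith)]
    exact iff_of_true hhi hz0
  · have hwrap : z % N = z + N := by
      rw [← add_emod_right, emod_eq_of_lt (by linarith) (by linarith)]
    rw [hwrap]
    exact iff_of_false (by linarith) hz0

theorem mul_add_nonneg_iff_pos {c d r : ℤ} (hd : d ≠ 0) (hr : 0 ≤ r) (hrc : r < c) :
    0 ≤ c * d + r ↔ 0 < d := by
  rcases hd.lt_or_gt with hneg | hpos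
  · have : c * d ≤ -c := by nlinarith
    exact iff_of_false (by linarith) hneg.not_gt
  · exact iff_of_true (by nlinarith) hpos

theorem abs_mul_add_lt_mul {c d r B : ℤ} (hd : |d| < B) (hr : 0 ≤ r) (hrc : r < c) :
    |c * d + r| < c * B := by
  have hc : 0 ≤ c := hr.trans hrc.le
  calc |c * d + r| ≤ c * |d| + r := by
        simpa [abs_mul, abs_of_nonneg hc, abs_of_nonneg hr] using abs_add_le (c * d) r
    _ < c * (|d| + 1) := by rw [mul_add_one]; linarith
    _ ≤ c * B := mul_le_mul_of_nonneg_left (add_one_le_of_lt hd) hc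

end Int

theorem smin_masked_comparison_general (ℓ N : ℕ) (hℓ16 : 16 ≤ ℓ)
    (hN : 2 ^ (ℓ - 1) ≤ N)
    (a b r' r : ℕ) (hab : a ≠ b)
    (ha : a < 2 ^ (ℓ / 8)) (hb : b < 2 ^ (ℓ / 8))
    (hr'lo : 2 ^ (ℓ / 8) ≤ r') (hr'hi : r' < 2 ^ (ℓ / 4 - 1))
    (hr : r < 2 ^ (ℓ / 8)) :
    ((r' : ℤ) * ((a : ℤ) - (b : ℤ)) + (r : ℤ)) % (N : ℤ) < 2 ^ (ℓ / 2) ↔ b < a := by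
  have hrr' : (r : ℤ) < r' := by exact_mod_cast hr.trans_le hr'lo
  have hdiff : |(a : ℤ) - b| < 2 ^ (ℓ / 8) :=
    abs_sub_lt_of_nonneg_of_lt (by positivity) (by exact_mod_cast ha) (by positivity)
      (by exact_mod_cast hb)
  have hmask : r' * 2 ^ (ℓ / 8) ≤ 2 ^ (ℓ / 2) :=
    calc r' * 2 ^ (ℓ / 8) ≤ 2 ^ (ℓ / 4 - 1) * 2 ^ (ℓ / 8) := Nat.mul_le_mul_right _ hr'hi.le
      _ = 2 ^ (ℓ / 4 - 1 + ℓ / 8) := (pow_add _ _ _).symm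
      _ ≤ 2 ^ (ℓ / 2) := Nat.pow_le_pow_right two_pos (by omega)
  have hmodulus : 2 * 2 ^ (ℓ / 2) ≤ N :=
    calc 2 * 2 ^ (ℓ / 2) = 2 ^ (ℓ / 2 + 1) := (pow_succ' _ _).symm
      _ ≤ 2 ^ (ℓ - 1) := Nat.pow_le_pow_right two_pos (by omega)
      _ ≤ N := hN
  have hz : |(r' : ℤ) * ((a : ℤ) - b) + r| < 2 ^ (ℓ / 2) :=
    (Int.abs_mul_add_lt_mul hdiff (by positivity) hrr').trans_le (by exact_mod_cast hmask)
  rw [Int.emod_lt_iff_nonneg_of_abs_lt hz (by exact_mod_cast hmodulus),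
    Int.mul_add_nonneg_iff_pos (sub_ne_zero.mpr (by exact_mod_cast hab)) (by positivity) hrr',
    sub_pos, Nat.cast_lt]

theorem smin_masked_comparison (ℓ N : ℕ) (hℓ16 : 16 ≤ ℓ) (hℓ8 : 8 ∣ ℓ)
    (hN : 2 ^ (ℓ - 1) ≤ N)
    (a b r' r : ℕ) (hab : a ≠ b)
    (ha : a < 2 ^ (ℓ / 8)) (hb : b < 2 ^ (ℓ / 8))
    (hr'lo : 2 ^ (ℓ / 8) ≤ r') (hr'hi : r' < 2 ^ (ℓ / 4 - 1))
    (hr : r < 2 ^ (ℓ / 8)) :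
    ((r' : ℤ) * ((a : ℤ) - (b : ℤ)) + (r : ℤ)) % (N : ℤ) < 2 ^ (ℓ / 2) ↔ b < a :=
  smin_masked_comparison_general ℓ N hℓ16 hN a b r' r hab ha hb hr'lo hr'hi hr
end

section
/- (BPS-k correctness) Let n, k, MWeight be natural numbers with k ≤ n, and let w : Fin n → ℕ satisfy 0 < w i and w i < MWeight for every i. Define the following k-round procedure: start with v⁰ := w; in round t (1 ≤ t ≤ k), let i_t be the least index at which v^{t−1} attains its minimum, output o_t := v^{t−1} i_t, and set v^t := the function v^{t−1} updated at i_t to the value o_t · MWeight. Then the output list (o_1, …, o_k) is nondecreasing and equals the first k entries of the multiset of values {w i : i} listed in nondecreasing order; i.e., the procedure returns exactly the k smallest weights, smallest first. -/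
/-! Before round `t` the weight vector is `w` with the entries extracted so far multiplied by
`MWeight`. Since `0 < w i < MWeight`, every scaled entry is at least `MWeight` and hence larger
than every unscaled one, so as long as an unscaled entry remains (`t < k ≤ n`) the minimum is
attained at a fresh index and the output is the original weight there. Each output is at most
every weight not yet extracted, which makes the outputs nondecreasing and bounded by all weights
never extracted; the sorted list of all weights is therefore the outputs followed by the sorted
remaining weights. -/

open Finset

theorem Multiset.sort_coe_add {α : Type*} [LinearOrder α] {l : List α} {m : Multiset α}
    (hl : l.Pairwise (· ≤ ·)) (hle : ∀ a ∈ l, ∀ b ∈ m, a ≤ b) :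
    (↑l + m).sort (· ≤ ·) = l ++ m.sort (· ≤ ·) := by
  refine List.Perm.eq_of_pairwise' (Multiset.pairwise_sort _ _)
    (List.pairwise_append.2 ⟨hl, Multiset.pairwise_sort _ _, ?_⟩) ?_
  · exact fun a ha b hb => hle a ha b ((Multiset.mem_sort _).1 hb)
  · rw [← Multiset.coe_eq_coe, Multiset.sort_eq, ← Multiset.coe_add, Multiset.sort_eq]

theorem Finset.take_sort_map_univ {ι α : Type*} [Fintype ι] [LinearOrder α] (f : ι → α)
    (s : Finset ι) {l : List α} (hl : l.Pairwise (· ≤ ·)) (hls : (l : Multiset α) = s.val.map f)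
    (hle : ∀ a ∈ l, ∀ j ∉ s, a ≤ f j) :
    ((univ.val.map f).sort (· ≤ ·)).take l.length = l := by
  classical
  have hsplit : univ.val.map f = ↑l + sᶜ.val.map f := by
    rw [hls, ← Multiset.map_add, ← (disjUnion_eq_union s sᶜ disjoint_compl_right).trans
      (union_compl s)]
    rfl
  rw [hsplit, Multiset.sort_coe_add hl, List.take_left]
  simp only [Multiset.mem_map, mem_val, mem_compl]
  rintro a ha _ ⟨j, hj, rfl⟩
  exact hle a ha j hj

namespace BPS

variable {ι : Type*} [DecidableEq ι]

def extracted (idx : ℕ → ι) (t : ℕ) : Finset ι := (range t).image idx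

lemma extracted_succ (idx : ℕ → ι) (t : ℕ) :
    extracted idx (t + 1) = insert (idx t) (extracted idx t) := by
  rw [extracted, range_add_one, image_insert, extracted]

lemma extracted_mono (idx : ℕ → ι) {s t : ℕ} (hst : s ≤ t) : extracted idx s ⊆ extracted idx t :=
  image_subset_image (range_subset_range.2 hst)

lemma exists_notMem_extracted [Fintype ι] (idx : ℕ → ι) {t : ℕ} (ht : t < Fintype.card ι) :
    ∃ j, j ∉ extracted idx t := by
  obtain ⟨j, -, hj⟩ := exists_mem_notMem_of_card_lt_card (s := extracted idx t) (t := univ)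
    ((card_image_le.trans_eq (card_range t)).trans_lt ht)
  exact ⟨j, hj⟩

lemma notMem_of_piecewise_le {w : ι → ℕ} {M : ℕ} (hw : ∀ i, 0 < w i ∧ w i < M)
    {S : Finset ι} {i j : ι} (hj : j ∉ S)
    (hle : S.piecewise (fun i => w i * M) w i ≤ S.piecewise (fun i => w i * M) w j) :
    i ∉ S := by
  intro hi
  rw [piecewise_eq_of_mem _ _ _ hi, piecewise_eq_of_notMem _ _ _ hj] at hle
  have := Nat.le_mul_of_pos_left M (hw i).1
  have := (hw j).2
  omega

/-- `v t` is the weight vector before round `t + 1` (the paper's `vᵗ`), in which the entry at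
`idx t` is output as `o t` and then scaled by `M`. -/
structure IsTrace (w : ι → ℕ) (M k : ℕ) (v : ℕ → ι → ℕ) (idx : ℕ → ι) (o : ℕ → ℕ) : Prop where
  init : v 0 = w
  min_le : ∀ t < k, ∀ j, v t (idx t) ≤ v t j
  output : ∀ t < k, o t = v t (idx t)
  update : ∀ t < k, v (t + 1) = Function.update (v t) (idx t) (o t * M)

namespace IsTrace

variable [Fintype ι] {w : ι → ℕ} {M k : ℕ} {v : ℕ → ι → ℕ} {idx : ℕ → ι} {o : ℕ → ℕ}

lemma idx_notMem_of_eq_piecewise (h : IsTrace w M k v idx o) (hw : ∀ i, 0 < w i ∧ w i < M)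
    (hk : k ≤ Fintype.card ι) {t : ℕ} (ht : t < k)
    (hv : v t = (extracted idx t).piecewise (fun i => w i * M) w) :
    idx t ∉ extracted idx t := by
  obtain ⟨j, hj⟩ := exists_notMem_extracted idx (ht.trans_le hk)
  exact notMem_of_piecewise_le hw hj (hv ▸ h.min_le t ht j)

lemma eq_piecewise (h : IsTrace w M k v idx o) (hw : ∀ i, 0 < w i ∧ w i < M)
    (hk : k ≤ Fintype.card ι) {t : ℕ} (ht : t ≤ k) :
    v t = (extracted idx t).piecewise (fun i => w i * M) w := by
  induction t with
  | zero => rw [h.init, extracted, range_zero, image_empty, piecewise_empty]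
  | succ t ih =>
    have htk : t < k := ht
    rw [h.update t htk, h.output t htk, ih htk.le,
      piecewise_eq_of_notMem _ _ _ (h.idx_notMem_of_eq_piecewise hw hk htk (ih htk.le)),
      extracted_succ, piecewise_insert]

lemma idx_notMem (h : IsTrace w M k v idx o) (hw : ∀ i, 0 < w i ∧ w i < M)
    (hk : k ≤ Fintype.card ι) {t : ℕ} (ht : t < k) : idx t ∉ extracted idx t :=
  h.idx_notMem_of_eq_piecewise hw hk ht (h.eq_piecewise hw hk ht.le)

lemma output_eq (h : IsTrace w M k v idx o) (hw : ∀ i, 0 < w i ∧ w i < M)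
    (hk : k ≤ Fintype.card ι) {t : ℕ} (ht : t < k) : o t = w (idx t) := by
  rw [h.output t ht, h.eq_piecewise hw hk ht.le,
    piecewise_eq_of_notMem _ _ _ (h.idx_notMem hw hk ht)]

lemma output_le_of_notMem (h : IsTrace w M k v idx o) (hw : ∀ i, 0 < w i ∧ w i < M)
    (hk : k ≤ Fintype.card ι) {t : ℕ} (ht : t < k) {j : ι} (hj : j ∉ extracted idx t) :
    o t ≤ w j :=
  calc o t = v t (idx t) := h.output t ht
    _ ≤ v t j := h.min_le t ht j
    _ = w j := by rw [h.eq_piecewise hw hk ht.le, piecewise_eq_of_notMem _ _ _ hj]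

lemma output_le_output (h : IsTrace w M k v idx o) (hw : ∀ i, 0 < w i ∧ w i < M)
    (hk : k ≤ Fintype.card ι) {s t : ℕ} (hst : s < t) (ht : t < k) : o s ≤ o t :=
  h.output_eq hw hk ht ▸ h.output_le_of_notMem hw hk (hst.trans ht)
    fun hmem => h.idx_notMem hw hk ht (extracted_mono idx hst.le hmem)

lemma injOn_idx (h : IsTrace w M k v idx o) (hw : ∀ i, 0 < w i ∧ w i < M)
    (hk : k ≤ Fintype.card ι) : Set.InjOn idx (range k) := by
  intro s hs t ht hst
  by_contra hne
  wlog hlt : s < t generalizing s t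
  · exact this ht hs hst.symm (Ne.symm hne) (by omega)
  exact h.idx_notMem hw hk (mem_range.1 ht) (hst ▸ mem_image_of_mem idx (mem_range.2 hlt))

lemma coe_ofFn_output (h : IsTrace w M k v idx o) (hw : ∀ i, 0 < w i ∧ w i < M)
    (hk : k ≤ Fintype.card ι) :
    (List.ofFn fun t : Fin k => o t : Multiset ℕ) = (extracted idx k).val.map w := by
  have hofFn : (List.ofFn fun t : Fin k => o t) = (List.range k).map (w ∘ idx) := by
    rw [List.ofFn_eq_map, ← List.map_coe_finRange_eq_range, List.map_map]
    exact List.map_congr_left fun t _ => h.output_eq hw hk t.isLt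
  rw [hofFn, extracted, image_val_of_injOn (h.injOn_idx hw hk), Multiset.map_map, range_val,
    Multiset.range, Multiset.map_coe]

end IsTrace

end BPS

theorem bps_k_correctness_general (n k MWeight : ℕ) (hk : k ≤ n)
    (w : Fin n → ℕ) (hw : ∀ i, 0 < w i ∧ w i < MWeight)
    (v : ℕ → Fin n → ℕ) (idx : ℕ → Fin n) (o : ℕ → ℕ)
    (hv0 : v 0 = w)
    (hmin : ∀ t < k, ∀ j, v t (idx t) ≤ v t j)
    (ho : ∀ t < k, o t = v t (idx t))
    (hupd : ∀ t < k, v (t + 1) = Function.update (v t) (idx t) (o t * MWeight)) :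
    (List.ofFn fun t : Fin k => o t).Pairwise (· ≤ ·) ∧
    (List.ofFn fun t : Fin k => o t)
      = (Multiset.sort (Multiset.map w Finset.univ.val) (· ≤ ·)).take k := by
  have h : BPS.IsTrace w MWeight k v idx o := ⟨hv0, hmin, ho, hupd⟩
  have hk' : k ≤ Fintype.card (Fin n) := (Fintype.card_fin n).symm ▸ hk
  have hsorted : (List.ofFn fun t : Fin k => o t).Pairwise (· ≤ ·) :=
    List.pairwise_ofFn.2 fun s t hst => h.output_le_output hw hk' hst t.isLt
  have hbound : ∀ a ∈ List.ofFn (fun t : Fin k => o t), ∀ j ∉ BPS.extracted idx k, a ≤ w j := by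
    rintro a ha j hj
    obtain ⟨t, rfl⟩ := List.mem_ofFn.1 ha
    exact h.output_le_of_notMem hw hk' t.isLt fun hmem =>
      hj (BPS.extracted_mono idx t.isLt.le hmem)
  have htake := take_sort_map_univ w _ hsorted (h.coe_ofFn_output hw hk') hbound
  rw [List.length_ofFn] at htake
  exact ⟨hsorted, htake.symm⟩

/-- **BPS-k correctness.** The `k`-round minimum-extraction procedure of P-Med is described
by its trace: `v t` is the weight vector before round `t+1` (`v 0 = w`), `idx t` is the least
index at which `v t` attains its minimum, `o t` is the value output in round `t+1`, and the
selected entry is multiplied by `MWeight` afterwards. The outputs, in order, are exactly the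
`k` smallest entries of `w`, listed nondecreasingly. -/
theorem bps_k_correctness (n k MWeight : ℕ) (hk : k ≤ n)
    (w : Fin n → ℕ) (hw : ∀ i, 0 < w i ∧ w i < MWeight)
    (v : ℕ → Fin n → ℕ) (idx : ℕ → Fin n) (o : ℕ → ℕ)
    (hv0 : v 0 = w)
    (hmin : ∀ t < k, ∀ j, v t (idx t) ≤ v t j)
    (hleast : ∀ t < k, ∀ i : Fin n, (∀ j, v t i ≤ v t j) → idx t ≤ i)
    (ho : ∀ t < k, o t = v t (idx t))
    (hupd : ∀ t < k, v (t + 1) = Function.update (v t) (idx t) (o t * MWeight)) :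
    (List.ofFn fun t : Fin k => o t).Pairwise (· ≤ ·) ∧
    (List.ofFn fun t : Fin k => o t)
      = (Multiset.sort (Multiset.map w Finset.univ.val) (· ≤ ·)).take k :=
  bps_k_correctness_general n k MWeight hk w hw v idx o hv0 hmin ho hupd
end

section
/- (Ukkonen NFA prefix invariant) Let α be a type with decidable equality and ψ : List α a pattern of length m. Define the reachability relation Reach i j u ('state q_{i,j} of the Ukkonen automaton of ψ is reachable after consuming the input list u') inductively by: Reach 0 0 []; (horizontal/match) if Reach i j u and the (j+1)-st symbol of ψ is c, then Reach i (j+1) (u ++ [c]); (vertical/insertion) if Reach i j u then Reach (i+1) j (u ++ [c]) for any symbol c; (solid diagonal/substitution) if Reach i j u and j < m then Reach (i+1) (j+1) (u ++ [c]) for any symbol c; (dashed diagonal/deletion) if Reach i j u and j < m then Reach (i+1) (j+1) u. Then for every j ≤ m and every list u, the Levenshtein distance (with unit insertion, deletion and substitution costs) between u and the length-j prefix of ψ is the least natural number i such that Reach i j u holds. -/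
namespace Levenshtein

structure Cost (α β δ : Type*) where
  delete : α → δ
  insert : β → δ
  substitute : α → β → δ

def defaultCost {α : Type*} [DecidableEq α] : Cost α α ℕ where
  delete _ := 1
  insert _ := 1
  substitute a b := if a = b then 0 else 1

def impl {α β δ : Type*} [AddZeroClass δ] [Min δ] (C : Cost α β δ)
    (xs : List α) (y : β) (d : {r : List δ // 0 < r.length}) : {r : List δ // 0 < r.length} :=
  let ⟨ds, w⟩ := d
  xs.zip (ds.zip ds.tail) |>.foldr
    (init := ⟨[C.insert y + ds.getLast (by rintro rfl; simp at w)], by simp⟩)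
    (fun ⟨x, d₀, d₁⟩ ⟨r, w⟩ =>
      ⟨min (C.delete x + r[0]) (min (C.insert y + d₀) (C.substitute x y + d₁)) :: r, by simp⟩)

end Levenshtein

def suffixLevenshtein {α β δ : Type*} [AddZeroClass δ] [Min δ] (C : Levenshtein.Cost α β δ)
    (xs : List α) (ys : List β) : {r : List δ // 0 < r.length} :=
  ys.foldr
    (Levenshtein.impl C xs)
    (xs.foldr (init := ⟨[0], by simp⟩) (fun a ⟨r, w⟩ => ⟨(C.delete a + r[0]) :: r, by simp⟩))

def levenshtein {α β δ : Type*} [AddZeroClass δ] [Min δ] (C : Levenshtein.Cost α β δ)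
    (xs : List α) (ys : List β) : δ :=
  let ⟨r, _⟩ := suffixLevenshtein C xs ys
  r[0]

/-- `UkkonenReach ψ i j u` : state `q_{i,j}` of the Ukkonen NFA of the pattern `ψ`
is reachable after consuming the input list `u`. -/
inductive UkkonenReach {α : Type*} (ψ : List α) : ℕ → ℕ → List α → Prop
  | base : UkkonenReach ψ 0 0 []
  | horiz {i j : ℕ} {u : List α} {c : α} :
      UkkonenReach ψ i j u → ψ[j]? = some c → UkkonenReach ψ i (j + 1) (u ++ [c])
  | insert {i j : ℕ} {u : List α} (c : α) :
      UkkonenReach ψ i j u → UkkonenReach ψ (i + 1) j (u ++ [c])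
  | subst {i j : ℕ} {u : List α} (c : α) :
      UkkonenReach ψ i j u → j < ψ.length → UkkonenReach ψ (i + 1) (j + 1) (u ++ [c])
  | del {i j : ℕ} {u : List α} :
      UkkonenReach ψ i j u → j < ψ.length → UkkonenReach ψ (i + 1) (j + 1) u

/-!
A run of the automaton on `u` ending in `q_{i,j}` is an alignment of `u` with the length-`j`
prefix of `ψ` read left to right: horizontal arrows are matches, vertical arrows delete an input
symbol, solid diagonals substitute and dashed diagonals insert a pattern symbol, and the row
counts the edits. So `q_{i,j}` is reachable exactly when such an alignment of cost `i` exists, and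
the recursion behind the dynamic-programming definition of `levenshtein` shows that the distance
is the least such cost. The recursion peels symbols off the front while the automaton appends
them at the back; closing alignments under concatenation and reversal reconciles the two.
-/

theorem List.eq_getElem_zero_cons_tail {δ : Type*} :
    ∀ (l : List δ) (h : 0 < l.length), l = l[0] :: l.tail
  | _ :: _, _ => rfl

namespace Levenshtein

variable {α β δ : Type*} [AddZeroClass δ] [Min δ] (C : Cost α β δ)

theorem impl_length (xs : List α) (y : β) (d : {r : List δ // 0 < r.length})
    (w : d.1.length = xs.length + 1) : (impl C xs y d).1.length = xs.length + 1 := by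
  induction xs generalizing d with
  | nil => rfl
  | cons x xs ih =>
    match d, w with
    | ⟨_ :: d₁ :: ds, _⟩, w =>
      exact congrArg (· + 1) (ih ⟨d₁ :: ds, by simp⟩ (by simpa using w))

theorem impl_nil (y : β) (d : δ) :
    ∀ s : {r : List δ // 0 < r.length}, s.1 = [d] → (impl C [] y s).1 = [C.insert y + d]
  | ⟨_, _⟩, rfl => rfl

theorem impl_cons (x : α) (xs : List α) (y : β) (d : δ) :
    ∀ s t : {r : List δ // 0 < r.length}, s.1 = d :: t.1 →
      (impl C (x :: xs) y s).1 =
        min (C.delete x + (impl C xs y t).1[0]'(impl C xs y t).2)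
          (min (C.insert y + d) (C.substitute x y + t.1[0]'t.2)) :: (impl C xs y t).1
  | ⟨_, _⟩, ⟨_ :: _, _⟩, rfl => rfl

end Levenshtein

open Levenshtein

section

variable {α β δ : Type*} [AddZeroClass δ] [Min δ] (C : Cost α β δ)

theorem suffixLevenshtein_length (xs : List α) (ys : List β) :
    (suffixLevenshtein C xs ys).1.length = xs.length + 1 := by
  induction ys with
  | nil => induction xs with
    | nil => rfl
    | cons _ xs ih => exact congrArg (· + 1) ih
  | cons y ys ih => exact impl_length C xs y _ ih

theorem suffixLevenshtein_nil_left (ys : List β) :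
    (suffixLevenshtein C ([] : List α) ys).1 = [levenshtein C [] ys] := by
  refine List.ext_getElem (by simp [suffixLevenshtein_length]) fun i _ hi => ?_
  obtain rfl : i = 0 := by simpa using hi
  rfl

theorem suffixLevenshtein_cons_left (x : α) (xs : List α) (ys : List β) :
    (suffixLevenshtein C (x :: xs) ys).1 =
      levenshtein C (x :: xs) ys :: (suffixLevenshtein C xs ys).1 := by
  induction ys with
  | nil => rfl
  | cons y ys ih =>
    have tail_eq := congrArg List.tail (impl_cons C x xs y _ _ _ ih)
    rw [List.tail_cons] at tail_eq
    show (impl C (x :: xs) y (suffixLevenshtein C (x :: xs) ys)).1 =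
      levenshtein C (x :: xs) (y :: ys) :: (impl C xs y (suffixLevenshtein C xs ys)).1
    rw [← tail_eq]
    exact List.eq_getElem_zero_cons_tail _ _

@[simp] theorem levenshtein_cons_nil (x : α) (xs : List α) :
    levenshtein C (x :: xs) ([] : List β) = C.delete x + levenshtein C xs [] := rfl

@[simp] theorem levenshtein_nil_cons (y : β) (ys : List β) :
    levenshtein C ([] : List α) (y :: ys) = C.insert y + levenshtein C [] ys := by
  show (impl C [] y (suffixLevenshtein C [] ys)).1[0]'(impl C _ y _).2 = _
  simp only [impl_nil C y _ _ (suffixLevenshtein_nil_left C ys), List.getElem_cons_zero]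

@[simp] theorem levenshtein_cons_cons (x : α) (xs : List α) (y : β) (ys : List β) :
    levenshtein C (x :: xs) (y :: ys) =
      min (C.delete x + levenshtein C xs (y :: ys))
        (min (C.insert y + levenshtein C (x :: xs) ys)
          (C.substitute x y + levenshtein C xs ys)) := by
  show (impl C (x :: xs) y (suffixLevenshtein C (x :: xs) ys)).1[0]'(impl C _ y _).2 = _
  simp only [impl_cons C x xs y _ _ _ (suffixLevenshtein_cons_left C x xs ys),
    List.getElem_cons_zero]
  rfl

end

section LinearOrder

variable {α β δ : Type*} [AddZeroClass δ] [LinearOrder δ] (C : Cost α β δ)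

theorem levenshtein_cons_left_le (x : α) (xs : List α) (ys : List β) :
    levenshtein C (x :: xs) ys ≤ C.delete x + levenshtein C xs ys := by
  cases ys with
  | nil => exact le_of_eq (levenshtein_cons_nil C x xs)
  | cons y ys => exact (levenshtein_cons_cons C x xs y ys).trans_le (min_le_left _ _)

theorem levenshtein_cons_right_le (xs : List α) (y : β) (ys : List β) :
    levenshtein C xs (y :: ys) ≤ C.insert y + levenshtein C xs ys := by
  cases xs with
  | nil => exact le_of_eq (levenshtein_nil_cons C y ys)
  | cons x xs =>
    exact (levenshtein_cons_cons C x xs y ys).trans_le ((min_le_right _ _).trans (min_le_left _ _))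

theorem levenshtein_cons_cons_le (x : α) (xs : List α) (y : β) (ys : List β) :
    levenshtein C (x :: xs) (y :: ys) ≤ C.substitute x y + levenshtein C xs ys :=
  (levenshtein_cons_cons C x xs y ys).trans_le ((min_le_right _ _).trans (min_le_right _ _))

end LinearOrder

/-- `EditAlignment n xs ys`: `xs` is turned into `ys` by `n` unit-cost edits. A substitution
costs `1` even between equal symbols, as on the solid diagonals of the automaton. -/
inductive EditAlignment {α : Type*} : ℕ → List α → List α → Prop
  | nil : EditAlignment 0 [] []
  | keep {n xs ys} (c : α) : EditAlignment n xs ys → EditAlignment n (c :: xs) (c :: ys)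
  | delete {n xs ys} (x : α) : EditAlignment n xs ys → EditAlignment (n + 1) (x :: xs) ys
  | insert {n xs ys} (y : α) : EditAlignment n xs ys → EditAlignment (n + 1) xs (y :: ys)
  | substitute {n xs ys} (x y : α) :
      EditAlignment n xs ys → EditAlignment (n + 1) (x :: xs) (y :: ys)

namespace EditAlignment

variable {α : Type*}

theorem append {m n : ℕ} {xs ys xs' ys' : List α} (h : EditAlignment m xs ys)
    (h' : EditAlignment n xs' ys') : EditAlignment (m + n) (xs ++ xs') (ys ++ ys') := by
  induction h with
  | nil => simpa using h'
  | keep c _ ih => exact ih.keep c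
  | delete x _ ih => simpa [Nat.add_right_comm] using ih.delete x
  | insert y _ ih => simpa [Nat.add_right_comm] using ih.insert y
  | substitute x y _ ih => simpa [Nat.add_right_comm] using ih.substitute x y

theorem reverse {n : ℕ} {xs ys : List α} (h : EditAlignment n xs ys) :
    EditAlignment n xs.reverse ys.reverse := by
  induction h with
  | nil => exact nil
  | keep c _ ih => simpa using ih.append (nil.keep c)
  | delete x _ ih => simpa using ih.append (nil.delete x)
  | insert y _ ih => simpa using ih.append (nil.insert y)
  | substitute x y _ ih => simpa using ih.append (nil.substitute x y)

end EditAlignment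

section DefaultCost

variable {α : Type*} [DecidableEq α]

@[simp] theorem defaultCost_delete (x : α) : (defaultCost : Cost α α ℕ).delete x = 1 := rfl

@[simp] theorem defaultCost_insert (y : α) : (defaultCost : Cost α α ℕ).insert y = 1 := rfl

@[simp] theorem defaultCost_substitute (x y : α) :
    (defaultCost : Cost α α ℕ).substitute x y = if x = y then 0 else 1 := rfl

theorem editAlignment_levenshtein (xs ys : List α) :
    EditAlignment (levenshtein defaultCost xs ys) xs ys := by
  induction xs generalizing ys with
  | nil => induction ys with
    | nil => exact .nil
    | cons y ys ih => simpa [add_comm] using ih.insert y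
  | cons x xs ih => induction ys with
    | nil => simpa [add_comm] using (ih []).delete x
    | cons y ys ih' =>
      rw [levenshtein_cons_cons]
      refine min_rec' (EditAlignment · (x :: xs) (y :: ys))
        (by simpa [add_comm] using (ih _).delete x)
        (min_rec' (EditAlignment · (x :: xs) (y :: ys))
          (by simpa [add_comm] using ih'.insert y) ?_)
      by_cases hxy : x = y
      · subst hxy
        simpa using (ih ys).keep x
      · simpa [hxy, add_comm] using (ih ys).substitute x y

theorem levenshtein_le_of_editAlignment {n : ℕ} {xs ys : List α} (h : EditAlignment n xs ys) :
    levenshtein defaultCost xs ys ≤ n := by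
  induction h with
  | nil => rfl
  | keep c _ ih => exact (levenshtein_cons_cons_le defaultCost c _ c _).trans (by simpa using ih)
  | delete x _ ih =>
    exact (levenshtein_cons_left_le defaultCost x _ _).trans (by simpa [add_comm] using ih)
  | insert y _ ih =>
    exact (levenshtein_cons_right_le defaultCost _ y _).trans (by simpa [add_comm] using ih)
  | substitute x y _ ih =>
    refine (levenshtein_cons_cons_le defaultCost x _ y _).trans ?_
    simp only [defaultCost_substitute]
    split <;> omega

theorem levenshtein_isLeast (xs ys : List α) :
    IsLeast {n | EditAlignment n xs ys} (levenshtein defaultCost xs ys) :=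
  ⟨editAlignment_levenshtein xs ys, fun _ h => levenshtein_le_of_editAlignment h⟩

end DefaultCost

theorem List.getElem?_eq_of_append_singleton_prefix {α : Type*} {l ψ : List α} {c : α}
    (h : l ++ [c] <+: ψ) : ψ[l.length]? = some c := by
  obtain ⟨t, rfl⟩ := h
  simp

namespace UkkonenReach

variable {α : Type*} {ψ : List α}

theorem editAlignment_take {i j : ℕ} {u : List α} (h : UkkonenReach ψ i j u) :
    EditAlignment i u (ψ.take j) := by
  induction h with
  | base => simpa using EditAlignment.nil
  | horiz _ hc ih =>
    rw [List.take_add_one, hc]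
    simpa using ih.append (.keep _ .nil)
  | insert c _ ih => simpa using ih.append (.delete c .nil)
  | subst c _ hj ih =>
    rw [List.take_succ_eq_append_getElem hj]
    exact ih.append (.substitute c _ .nil)
  | del _ hj ih =>
    rw [List.take_succ_eq_append_getElem hj]
    simpa only [List.append_nil] using ih.append (.insert _ .nil)

theorem of_editAlignment {i : ℕ} {u v : List α} (h : EditAlignment i u v) (hv : v <+: ψ) :
    UkkonenReach ψ i v.length u := by
  suffices reversed : ∀ {i u v}, EditAlignment i u v → v.reverse <+: ψ →
      UkkonenReach ψ i v.length u.reverse by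
    simpa using reversed h.reverse (by simpa using hv)
  intro i u v h
  induction h with
  | nil => exact fun _ => base
  | keep c _ ih =>
    intro hv
    rw [List.reverse_cons] at hv ⊢
    exact .horiz (ih ((List.prefix_append _ _).trans hv))
      (by simpa using List.getElem?_eq_of_append_singleton_prefix hv)
  | delete x _ ih =>
    intro hv
    rw [List.reverse_cons]
    exact .insert x (ih hv)
  | insert y _ ih =>
    intro hv
    rw [List.reverse_cons] at hv
    exact .del (ih ((List.prefix_append _ _).trans hv)) (by simpa using hv.length_le)
  | substitute x y _ ih =>
    intro hv
    rw [List.reverse_cons] at hv ⊢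
    exact .subst x (ih ((List.prefix_append _ _).trans hv)) (by simpa using hv.length_le)

theorem iff_editAlignment_take {i j : ℕ} {u : List α} (hj : j ≤ ψ.length) :
    UkkonenReach ψ i j u ↔ EditAlignment i u (ψ.take j) := by
  refine ⟨editAlignment_take, fun h => ?_⟩
  simpa [hj] using of_editAlignment h (List.take_prefix j ψ)

end UkkonenReach

/-- **Ukkonen NFA prefix invariant.** For every `j ≤ m` and every input list `u`, the
Levenshtein distance (unit costs) between `u` and the length-`j` prefix of the pattern `ψ`
is the least row index `i` such that state `q_{i,j}` is reachable on input `u`. -/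
theorem ukkonen_prefix_invariant {α : Type*} [DecidableEq α] (ψ : List α)
    (j : ℕ) (hj : j ≤ ψ.length) (u : List α) :
    IsLeast {i : ℕ | UkkonenReach ψ i j u}
      (levenshtein Levenshtein.defaultCost u (ψ.take j)) := by
  simpa only [UkkonenReach.iff_editAlignment_take hj] using levenshtein_isLeast u (ψ.take j)
end
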